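/- arXiv:1109.0418 — 3 statements merged into one kernel-verified Lean document; each statement's English description precedes it below -/
import Mathlib

section
/- For tropical adjacency matrices A and B, the dependency graph G(A ⊗ B) is strongly connected if and only if G(A) and G(B) are jointly strongly connected, i.e., the union graph with edge set E(A) ∪ E(B) (equivalently G(A ⊕ B), where ⊕ is entrywise max) is strongly connected. -/
open Finset

/-- Square matrices over the binary tropical semiring `{0, -∞} ⊆ ℝ ∪ {-∞}`,
modeled with entries in `WithBot ℝ` (where `⊥` plays the role of `-∞`). -/
abbrev TMat (N : ℕ) := Matrix (Fin N) (Fin N) (WithBot ℝ)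

/-- A tropical adjacency matrix: all entries in `{0, -∞}` and zero diagonal. -/
def IsTropAdj {N : ℕ} (A : TMat N) : Prop :=
  (∀ i j, A i j = 0 ∨ A i j = ⊥) ∧ ∀ i, A i i = 0

/-- Tropical matrix product: `(A ⊗ B) i j = max_l (A i l + B l j)`. -/
def tropMul {N : ℕ} (A B : TMat N) : TMat N :=
  fun i j => Finset.univ.sup fun l => A i l + B l j

/-- The tropical identity matrix (`0` on the diagonal, `-∞` off it). -/
def tropId (N : ℕ) : TMat N := fun i j => if i = j then 0 else ⊥

/-- `k`-fold tropical power. -/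
def tropPow {N : ℕ} (A : TMat N) : ℕ → TMat N
  | 0 => tropId N
  | k + 1 => tropMul A (tropPow A k)

/-- The all-zero tropical matrix `𝟎`. -/
def zeroMat (N : ℕ) : TMat N := fun _ _ => 0

/-- Tropical matrix-vector product for a real vector: `(A ⊗ x) i = max_j (A i j + x j)`. -/
def tropMulVec {N : ℕ} (A : TMat N) (x : Fin N → ℝ) (i : Fin N) : WithBot ℝ :=
  Finset.univ.sup fun j => A i j + (x j : WithBot ℝ)

/-- The maximum of the entries of a real vector, viewed in `WithBot ℝ`. -/
def maxVal {N : ℕ} (x : Fin N → ℝ) : WithBot ℝ :=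
  Finset.univ.sup fun j => (x j : WithBot ℝ)

/-- The edge relation of the dependency graph `G(A)`:
`Edge A i j` means there is an edge `i → j`, i.e. `A j i = 0`. -/
def Edge {N : ℕ} (A : TMat N) (i j : Fin N) : Prop := A j i = 0

/-- Strong connectivity of a digraph on `Fin N` given by its edge relation. -/
def StronglyConnected {N : ℕ} (E : Fin N → Fin N → Prop) : Prop :=
  ∀ i j, Relation.ReflTransGen E i j

/-- `walkLe E k i j`: there is a directed walk from `i` to `j` of length at most `k`. -/
def walkLe {N : ℕ} (E : Fin N → Fin N → Prop) : ℕ → Fin N → Fin N → Prop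
  | 0 => Eq
  | k + 1 => fun i j => walkLe E k i j ∨ ∃ l, E i l ∧ walkLe E k l j

/-! As all entries are `≤ 0`, an edge `i → j` of `G(A ⊗ B)` is exactly a two-step walk `i → l → j`
with the first step in `G(B)` and the second in `G(A)`. The zero diagonals make both graphs
reflexive, so every edge of `G(A) ∪ G(B)` is such a two-step walk with one trivial step; hence
`G(A ⊗ B)` and `G(A) ∪ G(B)` have the same reflexive-transitive closure. -/

theorem add_eq_zero_iff_of_nonpos {α : Type*} [AddZeroClass α] [PartialOrder α] [AddLeftMono α]
    [AddRightMono α] {a b : α} (ha : a ≤ 0) (hb : b ≤ 0) : a + b = 0 ↔ a = 0 ∧ b = 0 :=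
  add_eq_zero_iff_of_nonneg (α := αᵒᵈ) ha hb

theorem max_eq_iff_of_le {α : Type*} [LinearOrder α] {a b c : α} (ha : a ≤ c) (hb : b ≤ c) :
    max a b = c ↔ a = c ∨ b = c := by
  rcases le_total a b with h | h <;> simp [h] <;> grind

theorem Finset.sup_eq_iff_of_le {α ι : Type*} [LinearOrder α] [OrderBot α] {s : Finset ι}
    {f : ι → α} {a : α} (hf : ∀ i ∈ s, f i ≤ a) (ha : a ≠ ⊥) :
    s.sup f = a ↔ ∃ i ∈ s, f i = a := by
  constructor
  · rintro rfl
    have hs : s.Nonempty := s.nonempty_iff_ne_empty.2 (by rintro rfl; exact ha rfl)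
    obtain ⟨i, hi, h⟩ := s.exists_mem_eq_sup hs f
    exact ⟨i, hi, h.symm⟩
  · rintro ⟨i, hi, rfl⟩
    exact le_antisymm (Finset.sup_le hf) (Finset.le_sup hi)

open Relation in
theorem Relation.reflTransGen_comp_eq_sup {α : Type*} {r s : α → α → Prop}
    (hr : ∀ a, r a a) (hs : ∀ a, s a a) :
    ReflTransGen (Comp r s) = ReflTransGen (r ⊔ s) := by
  refine le_antisymm (reflTransGen_closed ?_) (ReflTransGen.mono ?_)
  · rintro a c ⟨b, hab, hbc⟩
    exact .tail (.single (Or.inl hab)) (Or.inr hbc)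
  · rintro a b (hab | hab)
    exacts [⟨b, hab, hs b⟩, ⟨a, hr a, hab⟩]

section

variable {N : ℕ} {A B : TMat N}

lemma IsTropAdj.le_zero (hA : IsTropAdj A) (i j : Fin N) : A i j ≤ 0 := by
  rcases hA.1 i j with h | h <;> simp [h]

lemma edge_tropMul_iff (hA : ∀ i j, A i j ≤ 0) (hB : ∀ i j, B i j ≤ 0) {i j : Fin N} :
    Edge (tropMul A B) i j ↔ ∃ l, Edge B i l ∧ Edge A l j := by
  have hle : ∀ l ∈ univ, A j l + B l i ≤ 0 := fun l _ => add_nonpos (hA j l) (hB l i)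
  simp only [Edge, tropMul, Finset.sup_eq_iff_of_le hle WithBot.zero_ne_bot, mem_univ, true_and,
    add_eq_zero_iff_of_nonpos (hA _ _) (hB _ _), and_comm]

lemma edge_max_iff (hA : ∀ i j, A i j ≤ 0) (hB : ∀ i j, B i j ≤ 0) {i j : Fin N} :
    Edge (fun i j => max (A i j) (B i j)) i j ↔ Edge A i j ∨ Edge B i j :=
  max_eq_iff_of_le (hA j i) (hB j i)

end

/-- `G(A ⊗ B)` is strongly connected iff `G(A)` and `G(B)` are jointly strongly
connected, i.e. `G(A ⊕ B)` (entrywise max) is strongly connected. -/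
theorem tropMul_stronglyConnected_iff_jointly {N : ℕ} {A B : TMat N}
    (hA : IsTropAdj A) (hB : IsTropAdj B) :
    StronglyConnected (Edge (tropMul A B)) ↔
    StronglyConnected (Edge (fun i j => max (A i j) (B i j))) := by
  have hmul : Edge (tropMul A B) = Relation.Comp (Edge B) (Edge A) :=
    funext₂ fun _ _ => propext (edge_tropMul_iff hA.le_zero hB.le_zero)
  have hmax : Edge (fun i j => max (A i j) (B i j)) = Edge A ⊔ Edge B :=
    funext₂ fun _ _ => propext (edge_max_iff hA.le_zero hB.le_zero)
  rw [StronglyConnected, StronglyConnected, hmul, hmax, sup_comm,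
    Relation.reflTransGen_comp_eq_sup hB.2 hA.2]
end

section
/- Given a finite set {A_1,…,A_m} of N×N tropical adjacency matrices, there exists a finite sequence i_1,…,i_n with each i_r ∈ {1,…,m} such that A_{i_1} ⊗ A_{i_2} ⊗ ⋯ ⊗ A_{i_n} = 𝟎 if and only if the dependency graphs G(A_1),…,G(A_m) are jointly strongly connected (i.e., G(A_1 ⊕ ⋯ ⊕ A_m) is strongly connected). -/
open Finset

/-!
The binary tropical semiring `{0, -∞}` is the Boolean semiring, so the `(i, j)` entry of
`A_{r₁} ⊗ ⋯ ⊗ A_{rₙ}` is `0` exactly when there is a walk `j → ⋯ → i` that takes one step of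
`G(A_{rₙ})`, then one of `G(A_{rₙ₋₁})`, …, then one of `G(A_{r₁})`, where a step may also stay
put because the diagonals vanish. Hence a product equal to `𝟎` connects every pair of vertices,
and conversely every pair is connected by some product. Since the diagonals vanish, inserting
extra factors never destroys a zero entry, so the concatenation of these products, one for each
pair of vertices, is `𝟎`.
-/

open Relation

def IsBoolean {N : ℕ} (B : TMat N) : Prop := ∀ i j, B i j = 0 ∨ B i j = ⊥

section ZeroBot

variable {ι : Type*} [Fintype ι] {f : ι → WithBot ℝ}

lemma univ_sup_eq_zero_iff (hf : ∀ k, f k = 0 ∨ f k = ⊥) :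
    univ.sup f = 0 ↔ ∃ k, f k = 0 := by
  refine ⟨fun h => ?_, fun ⟨k, hk⟩ => ?_⟩
  · by_contra! hne
    have hbot : univ.sup f = ⊥ :=
      (Finset.sup_eq_bot_iff _ _).2 fun k _ => (hf k).resolve_left (hne k)
    simp [hbot] at h
  · refine le_antisymm (Finset.sup_le fun k _ => ?_) (hk ▸ Finset.le_sup (mem_univ k))
    rcases hf k with h | h <;> simp [h]

lemma univ_sup_eq_zero_or_eq_bot (hf : ∀ k, f k = 0 ∨ f k = ⊥) :
    univ.sup f = 0 ∨ univ.sup f = ⊥ := by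
  rw [or_iff_not_imp_left, univ_sup_eq_zero_iff hf, not_exists]
  exact fun h => (Finset.sup_eq_bot_iff _ _).2 fun k _ => (hf k).resolve_left (h k)

end ZeroBot

section Boolean

variable {N : ℕ} {B C : TMat N}

lemma isBoolean_tropId : IsBoolean (tropId N) := by
  intro i j
  by_cases h : i = j <;> simp [tropId, h]

lemma add_eq_zero_or_eq_bot_of_isBoolean (hB : IsBoolean B) (hC : IsBoolean C) (i k j : Fin N) :
    B i k + C k j = 0 ∨ B i k + C k j = ⊥ := by
  rcases hB i k with h₁ | h₁ <;> rcases hC k j with h₂ | h₂ <;> simp [h₁, h₂]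

lemma isBoolean_tropMul (hB : IsBoolean B) (hC : IsBoolean C) : IsBoolean (tropMul B C) :=
  fun i j => univ_sup_eq_zero_or_eq_bot (add_eq_zero_or_eq_bot_of_isBoolean hB hC i · j)

lemma tropMul_apply_eq_zero_iff (hB : IsBoolean B) (hC : IsBoolean C) (i j : Fin N) :
    tropMul B C i j = 0 ↔ ∃ k, B i k = 0 ∧ C k j = 0 := by
  refine (univ_sup_eq_zero_iff (add_eq_zero_or_eq_bot_of_isBoolean hB hC i · j)).trans ?_
  refine exists_congr fun k => ?_
  rcases hB i k with h₁ | h₁ <;> rcases hC k j with h₂ | h₂ <;> simp [h₁, h₂]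

def jointEdge {ι : Type*} (A : ι → TMat N) (i j : Fin N) : Prop := ∃ r, Edge (A r) i j

lemma edge_univ_sup_eq_jointEdge {ι : Type*} [Fintype ι] {A : ι → TMat N}
    (hA : ∀ r, IsBoolean (A r)) : Edge (fun i j => univ.sup fun r => A r i j) = jointEdge A := by
  ext i j
  exact univ_sup_eq_zero_iff fun r => hA r j i

end Boolean

section ListProd

variable {N : ℕ} {ι : Type*} {A : ι → TMat N}

def tropListProd (A : ι → TMat N) (l : List ι) : TMat N :=
  (l.map A).foldr tropMul (tropId N)

@[simp] lemma tropListProd_nil : tropListProd A [] = tropId N := rfl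

lemma isBoolean_tropListProd (hA : ∀ r, IsBoolean (A r)) (l : List ι) :
    IsBoolean (tropListProd A l) := by
  induction l with
  | nil => exact isBoolean_tropId
  | cons r l ih => exact isBoolean_tropMul (hA r) ih

lemma tropListProd_cons_apply_eq_zero_iff (hA : ∀ r, IsBoolean (A r)) (r : ι) (l : List ι)
    (i j : Fin N) :
    tropListProd A (r :: l) i j = 0 ↔ ∃ k, A r i k = 0 ∧ tropListProd A l k j = 0 :=
  tropMul_apply_eq_zero_iff (hA r) (isBoolean_tropListProd hA l) i j

lemma exists_tropListProd_eq_zero_iff_reflTransGen (hA : ∀ r, IsBoolean (A r)) (i j : Fin N) :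
    (∃ l, tropListProd A l i j = 0) ↔ ReflTransGen (jointEdge A) j i := by
  constructor
  · rintro ⟨l, hl⟩
    induction l generalizing i with
    | nil =>
      obtain rfl : i = j := by by_contra hij; simp [tropId, hij] at hl
      exact ReflTransGen.refl
    | cons r l ih =>
      obtain ⟨k, hik, hkj⟩ := (tropListProd_cons_apply_eq_zero_iff hA r l i j).1 hl
      exact (ih k hkj).tail ⟨r, hik⟩
  · intro h
    induction h with
    | refl => exact ⟨[], by simp [tropId]⟩
    | tail _ hki ih =>
      obtain ⟨l, hl⟩ := ih
      obtain ⟨r, hr⟩ := hki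
      exact ⟨r :: l, (tropListProd_cons_apply_eq_zero_iff hA r l _ j).2 ⟨_, hr, hl⟩⟩

lemma tropListProd_apply_eq_zero_of_sublist (hA : ∀ r, IsTropAdj (A r)) {l₁ l₂ : List ι}
    (hl : l₁.Sublist l₂) {i j : Fin N} (h : tropListProd A l₁ i j = 0) :
    tropListProd A l₂ i j = 0 := by
  have hB : ∀ r, IsBoolean (A r) := fun r => (hA r).1
  induction hl generalizing i with
  | slnil => exact h
  | cons r _ ih =>
    exact (tropListProd_cons_apply_eq_zero_iff hB r _ i j).2 ⟨i, (hA r).2 i, ih h⟩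
  | cons_cons r _ ih =>
    obtain ⟨k, hik, hkj⟩ := (tropListProd_cons_apply_eq_zero_iff hB r _ i j).1 h
    exact (tropListProd_cons_apply_eq_zero_iff hB r _ i j).2 ⟨k, hik, ih hkj⟩

end ListProd

/-- Given tropical adjacency matrices `A_1, …, A_m`, there is a finite nonempty sequence
of indices whose tropical product is `𝟎` iff the dependency graphs are jointly strongly
connected, i.e. `G(A_1 ⊕ ⋯ ⊕ A_m)` is strongly connected. -/
theorem exists_mortal_sequence_iff_jointly_stronglyConnected {N m : ℕ} (hm : 1 ≤ m)
    (A : Fin m → TMat N) (hA : ∀ r, IsTropAdj (A r)) :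
    (∃ l : List (Fin m), l ≠ [] ∧ (l.map A).foldr tropMul (tropId N) = zeroMat N) ↔
    StronglyConnected (Edge (fun i j => Finset.univ.sup fun r => A r i j)) := by
  have hB : ∀ r, IsBoolean (A r) := fun r => (hA r).1
  rw [edge_univ_sup_eq_jointEdge hB]
  refine ⟨fun ⟨l, _, hl⟩ i j => ?_, fun hSC => ?_⟩
  · exact (exists_tropListProd_eq_zero_iff_reflTransGen hB j i).1 ⟨l, congrFun₂ hl j i⟩
  · choose w hw using fun p : Fin N × Fin N =>
      (exists_tropListProd_eq_zero_iff_reflTransGen hB p.1 p.2).2 (hSC p.2 p.1)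
    -- the extra factor keeps the sequence nonempty when `N = 0`
    refine ⟨⟨0, hm⟩ :: (univ.toList.map w).flatten, List.cons_ne_nil _ _, ?_⟩
    funext i j
    have hsub : (w (i, j)).Sublist (⟨0, hm⟩ :: (univ.toList.map w).flatten) :=
      (List.sublist_flatten_of_mem (List.mem_map_of_mem (mem_toList.2 (mem_univ _)))).cons _
    exact tropListProd_apply_eq_zero_of_sublist hA hsub (hw (i, j))
end

section
/- For a specific initial value x(0) ∈ ℝ^N whose maximum is attained exactly on a set S of nodes, the max-consensus system reaches consensus at step k (i.e., (A^k ⊗ x(0))_i = max_j x_j(0) for all i) if and only if for every node i there exists a node s ∈ S with (A^k)_{is} = 0; equivalently, A^k ⊗ y = 𝟎-vector where y_i = 0 if x_i(0) = max_j x_j(0) and y_i = -∞ otherwise. -/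
open Finset

/-- Tropical matrix-vector product for a vector with entries in `ℝ ∪ {-∞}`. -/
def tropMulVecB {N : ℕ} (A : TMat N) (y : Fin N → WithBot ℝ) (i : Fin N) : WithBot ℝ :=
  Finset.univ.sup fun j => A i j + y j

/-!
Every power of a matrix with entries in `{0, -∞}` again has entries in `{0, -∞}`, so
`(A^k ⊗ y)_i` is the maximum of `y` over the support `{s : (A^k)_{is} = 0}` of row `i`.
For `y ≤ c` with `c > -∞`, that maximum equals `c` exactly when the support meets
`{s : y_s = c}`.
Applied to `y = x(0)`, `c = max x(0)` and to the indicator `y` of `S`, `c = 0`, both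
conditions become "row `i` of `A^k` has a zero in a column of `S`".
-/

lemma add_mem_zero_bot {α : Type*} [AddZeroClass α] {a b : WithBot α}
    (ha : a ∈ ({0, ⊥} : Set (WithBot α))) (hb : b ∈ ({0, ⊥} : Set (WithBot α))) :
    a + b ∈ ({0, ⊥} : Set (WithBot α)) := by
  rcases ha with rfl | rfl <;> rcases hb with rfl | rfl <;> simp

lemma tropPow_eq_zero_or_bot {N : ℕ} {A : TMat N} (hA : ∀ i j, A i j = 0 ∨ A i j = ⊥)
    (k : ℕ) (i j : Fin N) : tropPow A k i j = 0 ∨ tropPow A k i j = ⊥ := by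
  induction k generalizing i j with
  | zero => by_cases h : i = j <;> simp [tropPow, tropId, h]
  | succ k ih =>
    show univ.sup (fun l => A i l + tropPow A k l j) ∈ ({0, ⊥} : Set (WithBot ℝ))
    refine sup_mem ({0, ⊥} : Set (WithBot ℝ)) (Or.inr rfl) ?_ _ _
      fun l _ => add_mem_zero_bot (hA i l) (ih l j)
    rintro a (rfl | rfl) b (rfl | rfl) <;> simp

lemma Finset.sup_add_eq_iff_of_zero_or_bot {ι α : Type*} [AddCommMonoid α] [LinearOrder α]
    [IsOrderedAddMonoid α] {s : Finset ι} {f y : ι → WithBot α} {c : WithBot α}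
    (hf : ∀ j, f j = 0 ∨ f j = ⊥) (hy : ∀ j, y j ≤ c) (hc : c ≠ ⊥) :
    s.sup (fun j => f j + y j) = c ↔ ∃ j ∈ s, y j = c ∧ f j = 0 := by
  constructor
  · intro h
    have hs : s.Nonempty := nonempty_iff_ne_empty.2 fun hs => hc (by simp [← h, hs])
    obtain ⟨j, hj, hjmax⟩ := exists_mem_eq_sup s hs fun j => f j + y j
    rcases hf j with hfj | hfj
    · exact ⟨j, hj, by simpa [hfj] using hjmax.symm.trans h, hfj⟩
    · exact absurd (by simpa [hfj] using hjmax.symm.trans h) hc.symm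
  · rintro ⟨j, hj, hyj, hfj⟩
    refine le_antisymm (Finset.sup_le fun l _ => ?_) ?_
    · calc f l + y l ≤ 0 + c := add_le_add ((hf l).elim le_of_eq fun h => h ▸ bot_le) (hy l)
        _ = c := zero_add c
    · calc c = f j + y j := by rw [hfj, hyj, zero_add]
        _ ≤ _ := Finset.le_sup (f := fun j => f j + y j) hj

lemma maxVal_ne_bot {N : ℕ} (x : Fin N → ℝ) (i : Fin N) : maxVal x ≠ ⊥ :=
  ne_bot_of_le_ne_bot (WithBot.coe_ne_bot (a := x i))
    (Finset.le_sup (f := fun j => (x j : WithBot ℝ)) (mem_univ i))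

lemma tropMulVec_eq_maxVal_iff {N : ℕ} {B : TMat N} (x : Fin N → ℝ) {i : Fin N}
    (hB : ∀ j, B i j = 0 ∨ B i j = ⊥) :
    tropMulVec B x i = maxVal x ↔ ∃ s, (x s : WithBot ℝ) = maxVal x ∧ B i s = 0 := by
  rw [tropMulVec]
  simpa only [mem_univ, true_and] using
    sup_add_eq_iff_of_zero_or_bot (s := univ) (c := maxVal x) hB
      (fun j => Finset.le_sup (f := fun j => (x j : WithBot ℝ)) (mem_univ j)) (maxVal_ne_bot x i)

lemma tropMulVecB_maxIndicator_eq_zero_iff {N : ℕ} {B : TMat N} (x : Fin N → ℝ) {i : Fin N}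
    (hB : ∀ j, B i j = 0 ∨ B i j = ⊥) :
    tropMulVecB B (fun s => if (x s : WithBot ℝ) = maxVal x then (0 : WithBot ℝ) else ⊥) i = 0 ↔
      ∃ s, (x s : WithBot ℝ) = maxVal x ∧ B i s = 0 := by
  rw [tropMulVecB,
    sup_add_eq_iff_of_zero_or_bot hB (fun j => by split_ifs <;> simp) WithBot.zero_ne_bot]
  simp

theorem consensus_for_specific_initial_iff_general {N : ℕ} {A : TMat N}
    (hA : IsTropAdj A) (x : Fin N → ℝ) (k : ℕ) :
    ((∀ i, tropMulVec (tropPow A k) x i = maxVal x) ↔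
      ∀ i, ∃ s, (x s : WithBot ℝ) = maxVal x ∧ tropPow A k i s = 0) ∧
    ((∀ i, tropMulVec (tropPow A k) x i = maxVal x) ↔
      ∀ i, tropMulVecB (tropPow A k)
        (fun s => if (x s : WithBot ℝ) = maxVal x then (0 : WithBot ℝ) else ⊥) i = 0) := by
  have hPow := tropPow_eq_zero_or_bot hA.1 k
  have hMax i := tropMulVec_eq_maxVal_iff x (hPow i)
  have hInd i := tropMulVecB_maxIndicator_eq_zero_iff x (hPow i)
  exact ⟨forall_congr' hMax, forall_congr' fun i => (hMax i).trans (hInd i).symm⟩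

/-- For a specific initial vector `x(0)` with maximum attained on the set
`S = {s : x s = max}`, consensus at step `k` holds iff every node `i` has some `s ∈ S`
with `(A^k) i s = 0`; equivalently `A^k ⊗ y` is the all-zero vector, where `y s = 0`
for `s ∈ S` and `y s = -∞` otherwise. -/
theorem consensus_for_specific_initial_iff {N : ℕ} (hN : 1 ≤ N) {A : TMat N}
    (hA : IsTropAdj A) (x : Fin N → ℝ) (k : ℕ) :
    ((∀ i, tropMulVec (tropPow A k) x i = maxVal x) ↔
      ∀ i, ∃ s, (x s : WithBot ℝ) = maxVal x ∧ tropPow A k i s = 0) ∧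
    ((∀ i, tropMulVec (tropPow A k) x i = maxVal x) ↔
      ∀ i, tropMulVecB (tropPow A k)
        (fun s => if (x s : WithBot ℝ) = maxVal x then (0 : WithBot ℝ) else ⊥) i = 0) :=
  consensus_for_specific_initial_iff_general hA x k
end
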